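/- arXiv:1912.03193 — 3 statements merged into one kernel-verified Lean document; each statement's English description precedes it below -/
import Mathlib

section
/- Let γ ∈ [0,1) and let (R_t)_{t≥0} be a bounded sequence of real random variables with |R_t| ≤ R_max almost surely. Define J = (1-γ) E[∑_{t=0}^∞ γ^t R_t]. Then (1-γ)^2 E[(∑_{t=0}^∞ γ^t R_t - J/(1-γ))^2] ≤ (1-γ) E[∑_{t=0}^∞ γ^t (R_t - J)^2]. In words: the (normalized) return variance is bounded by the reward volatility. -/
/-!
The bound holds pathwise: since `∑ γ^t = 1/(1-γ)`, the centred return is `∑ γ^t (R_t - J)`,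
and Jensen's inequality for the geometric probability weights `(1-γ) γ^t` gives
`((1-γ) ∑ γ^t x_t)^2 ≤ (1-γ) ∑ γ^t x_t^2`. Boundedness of the rewards makes every series summable
and the right-hand side integrable, so the pathwise inequality integrates.
-/

open MeasureTheory Filter

theorem sq_tsum_mul_le_tsum_mul_sq {ι : Type*} {w x : ι → ℝ} (hw : ∀ i, 0 ≤ w i)
    (hw1 : HasSum w 1) (h1 : Summable fun i => w i * x i) (h2 : Summable fun i => w i * x i ^ 2) :
    (∑' i, w i * x i) ^ 2 ≤ ∑' i, w i * x i ^ 2 := by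
  obtain ⟨m, hm⟩ := h1
  obtain ⟨v, hv⟩ := h2
  rw [hm.tsum_eq, hv.tsum_eq]
  -- the variance `∑ w (x - m)^2` is nonnegative and equals `v - m^2`
  have hvar : HasSum (fun i => w i * (x i - m) ^ 2) (v - m ^ 2) := by
    have h := (hv.sub (hm.mul_left (2 * m))).add (hw1.mul_left (m ^ 2))
    rw [show v - 2 * m * m + m ^ 2 * 1 = v - m ^ 2 by ring] at h
    exact h.congr_fun fun i => by ring
  linarith [hvar.nonneg fun i => mul_nonneg (hw i) (sq_nonneg _)]

section Geometric

variable {γ C : ℝ} {x : ℕ → ℝ}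

theorem summable_pow_mul_of_abs_le (hγ0 : 0 ≤ γ) (hγ1 : γ < 1) (hx : ∀ t, |x t| ≤ C) :
    Summable fun t => γ ^ t * x t :=
  ((summable_geometric_of_lt_one hγ0 hγ1).mul_right C).of_norm_bounded fun t => by
    rw [norm_mul, norm_pow, Real.norm_of_nonneg hγ0, Real.norm_eq_abs]
    exact mul_le_mul_of_nonneg_left (hx t) (pow_nonneg hγ0 t)

theorem tsum_pow_mul_le_of_le (hγ0 : 0 ≤ γ) (hγ1 : γ < 1) (hs : Summable fun t => γ ^ t * x t)
    (hx : ∀ t, x t ≤ C) : ∑' t, γ ^ t * x t ≤ C / (1 - γ) := by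
  have hgeo := hasSum_geometric_of_lt_one hγ0 hγ1
  rw [div_eq_mul_inv]
  refine hasSum_le (fun t => ?_) hs.hasSum (hgeo.mul_left C)
  rw [mul_comm C]
  exact mul_le_mul_of_nonneg_left (hx t) (pow_nonneg hγ0 t)

theorem tsum_pow_mul_sub_const (hγ0 : 0 ≤ γ) (hγ1 : γ < 1) (hs : Summable fun t => γ ^ t * x t)
    (c : ℝ) : ∑' t, γ ^ t * (x t - c) = ∑' t, γ ^ t * x t - c / (1 - γ) := by
  rw [div_eq_mul_inv]
  refine (tsum_congr fun t => ?_).trans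
    (hs.hasSum.sub ((hasSum_geometric_of_lt_one hγ0 hγ1).mul_left c)).tsum_eq
  ring

theorem sq_tsum_pow_mul_le (hγ0 : 0 ≤ γ) (hγ1 : γ < 1) (hx : ∀ t, |x t| ≤ C) :
    (1 - γ) ^ 2 * (∑' t, γ ^ t * x t) ^ 2 ≤ (1 - γ) * ∑' t, γ ^ t * x t ^ 2 := by
  have hx2 : ∀ t, |x t ^ 2| ≤ C ^ 2 := fun t => by
    rw [abs_pow]; exact pow_le_pow_left₀ (abs_nonneg _) (hx t) 2
  have hw1 : HasSum (fun t => (1 - γ) * γ ^ t) 1 := by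
    simpa [mul_inv_cancel₀ (sub_ne_zero.2 hγ1.ne')] using
      (hasSum_geometric_of_lt_one hγ0 hγ1).mul_left (1 - γ)
  have key := sq_tsum_mul_le_tsum_mul_sq (x := x)
    (fun t => mul_nonneg (sub_nonneg.2 hγ1.le) (pow_nonneg hγ0 t)) hw1
    (by simpa only [mul_assoc] using (summable_pow_mul_of_abs_le hγ0 hγ1 hx).mul_left (1 - γ))
    (by simpa only [mul_assoc] using (summable_pow_mul_of_abs_le hγ0 hγ1 hx2).mul_left (1 - γ))
  simpa only [mul_assoc, tsum_mul_left, mul_pow] using key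

end Geometric

theorem AEMeasurable.tsum_of_ae_summable {α E : Type*} [MeasurableSpace α] {μ : Measure α}
    [NormedAddCommGroup E] [MeasurableSpace E] [BorelSpace E] [SecondCountableTopology E]
    {f : ℕ → α → E} (hf : ∀ n, AEMeasurable (f n) μ) (hs : ∀ᵐ a ∂μ, Summable fun n => f n a) :
    AEMeasurable (fun a => ∑' n, f n a) μ :=
  aemeasurable_of_tendsto_metrizable_ae' (fun N => Finset.aemeasurable_sum _ fun n _ => hf n)
    (hs.mono fun _ h => by simpa only [Finset.sum_apply] using h.hasSum.tendsto_sum_nat)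

theorem stmt_0_general {Ω : Type*} [MeasureSpace Ω] [IsProbabilityMeasure (volume : Measure Ω)]
    (γ Rmax : ℝ) (hγ0 : 0 ≤ γ) (hγ1 : γ < 1)
    (R : ℕ → Ω → ℝ) (hmeas : ∀ t, Measurable (R t))
    (hbd : ∀ t, ∀ᵐ ω, |R t ω| ≤ Rmax)
    (J : ℝ) :
    (1 - γ) ^ 2 * ∫ ω, ((∑' t : ℕ, γ ^ t * R t ω) - J / (1 - γ)) ^ 2
      ≤ (1 - γ) * ∫ ω, ∑' t : ℕ, γ ^ t * (R t ω - J) ^ 2 := by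
  set C := Rmax + |J|
  have hdev : ∀ᵐ ω, ∀ t, |R t ω - J| ≤ C :=
    (ae_all_iff.2 hbd).mono fun ω h t => (abs_sub _ _).trans (add_le_add (h t) le_rfl)
  have hdev2 : ∀ᵐ ω, ∀ t, |(R t ω - J) ^ 2| ≤ C ^ 2 := hdev.mono fun ω h t => by
    rw [abs_pow]; exact pow_le_pow_left₀ (abs_nonneg _) (h t) 2
  have hpath : ∀ᵐ ω, (1 - γ) ^ 2 * ((∑' t, γ ^ t * R t ω) - J / (1 - γ)) ^ 2
      ≤ (1 - γ) * ∑' t, γ ^ t * (R t ω - J) ^ 2 := by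
    filter_upwards [ae_all_iff.2 hbd, hdev] with ω hR hRJ
    rw [← tsum_pow_mul_sub_const hγ0 hγ1 (summable_pow_mul_of_abs_le hγ0 hγ1 hR)]
    exact sq_tsum_pow_mul_le hγ0 hγ1 hRJ
  have hint : Integrable (fun ω => (1 - γ) * ∑' t, γ ^ t * (R t ω - J) ^ 2) := by
    refine (Integrable.mono' (integrable_const (C ^ 2 / (1 - γ))) ?_ ?_).const_mul (1 - γ)
    · refine (AEMeasurable.tsum_of_ae_summable (fun t => ?_) ?_).aestronglyMeasurable
      · exact ((((hmeas t).sub_const J).pow_const 2).const_mul _).aemeasurable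
      · exact hdev2.mono fun ω h => summable_pow_mul_of_abs_le hγ0 hγ1 h
    · filter_upwards [hdev2] with ω h
      have hs := summable_pow_mul_of_abs_le hγ0 hγ1 h
      rw [Real.norm_of_nonneg (tsum_nonneg fun t => mul_nonneg (pow_nonneg hγ0 t) (sq_nonneg _))]
      exact tsum_pow_mul_le_of_le hγ0 hγ1 hs fun t => (le_abs_self _).trans (h t)
  rw [← integral_const_mul, ← integral_const_mul]
  exact integral_mono_of_nonneg (ae_of_all _ fun ω => by positivity) hint hpath

theorem stmt_0 {Ω : Type*} [MeasureSpace Ω] [IsProbabilityMeasure (volume : Measure Ω)]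
    (γ Rmax : ℝ) (hγ0 : 0 ≤ γ) (hγ1 : γ < 1)
    (R : ℕ → Ω → ℝ) (hmeas : ∀ t, Measurable (R t))
    (hbd : ∀ t, ∀ᵐ ω, |R t ω| ≤ Rmax)
    (J : ℝ) (hJ : J = (1 - γ) * ∫ ω, ∑' t : ℕ, γ ^ t * R t ω) :
    (1 - γ) ^ 2 * ∫ ω, ((∑' t : ℕ, γ ^ t * R t ω) - J / (1 - γ)) ^ 2
      ≤ (1 - γ) * ∫ ω, ∑' t : ℕ, γ ^ t * (R t ω - J) ^ 2 :=
  stmt_0_general γ Rmax hγ0 hγ1 R hmeas hbd J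
end

section
/- (Performance difference for expected return, Kakade–Langford) For a finite MDP with two policies π and π̃, define J_π = (1-γ) E_{τ|π}[∑_t γ^t R(s_t,a_t)], the value function V_π, and advantage A_π(s,a) = Q_π(s,a) - V_π(s). Then J_{π̃} = J_π + (1-γ) E_{τ|π̃}[∑_{t=0}^∞ γ^t A_π(s_t,a_t)], where the expectation is over trajectories generated by π̃ from initial distribution μ. -/
open Finset

/-- t-step iterate of a transition kernel on a finite space. -/
noncomputable def kerPow {T : Type*} [Fintype T] [DecidableEq T] (K : T → T → ℝ) :
    ℕ → T → T → ℝ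
  | 0 => fun s s' => if s = s' then 1 else 0
  | (t + 1) => fun s s' => ∑ u, K s u * kerPow K t u s'

/-- State-action transition kernel induced by the MDP dynamics `P` and the policy `π`. -/
def saKer {S A : Type*} (P : S → A → S → ℝ) (π : S → A → ℝ) :
    S × A → S × A → ℝ :=
  fun p q => P p.1 p.2 q.1 * π q.1 q.2

/-- Expected discounted sum of `f(s_t, a_t)` starting from `(s,a)`, following `π`. -/
noncomputable def Qgen {S A : Type*} [Fintype S] [Fintype A] [DecidableEq S] [DecidableEq A]
    (P : S → A → S → ℝ) (π : S → A → ℝ) (f : S → A → ℝ) (γ : ℝ) (s : S) (a : A) : ℝ :=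
  ∑' t : ℕ, γ ^ t * ∑ p : S × A, kerPow (saKer P π) t (s, a) p * f p.1 p.2

/-- Expected discounted sum `E_{τ|π}[∑ₜ γ^t f(s_t,a_t)]` over trajectories started
from the initial distribution `μ` and following `π`. -/
noncomputable def expDisc {S A : Type*} [Fintype S] [Fintype A] [DecidableEq S] [DecidableEq A]
    (P : S → A → S → ℝ) (π : S → A → ℝ) (μ : S → ℝ) (γ : ℝ) (f : S → A → ℝ) : ℝ :=
  ∑ s, μ s * ∑ a, π s a * Qgen P π f γ s a


/-! Let `V` be the value of `π`. The Bellman equation for `π` turns the advantage into the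
potential-shaped reward `R(s,a) + γ 𝔼[V(s') | s,a] - V(s)`. Along any trajectory the shaping terms
telescope, so under `π̃` the discounted return of the advantage is that of `R` minus `V(s₀)`;
averaging over `s₀ ~ μ` gives `𝔼_μ V = expDisc P π μ γ R` and hence the identity. -/

section Kernel

variable {T : Type*} [Fintype T] [DecidableEq T] {K : T → T → ℝ}

theorem kerPow_nonneg (hK0 : ∀ p q, 0 ≤ K p q) : ∀ t p q, 0 ≤ kerPow K t p q
  | 0, p, q => by unfold kerPow; split <;> norm_num
  | t + 1, p, q => sum_nonneg fun u _ => mul_nonneg (hK0 p u) (kerPow_nonneg hK0 t u q)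

theorem sum_kerPow (hK1 : ∀ p, ∑ q, K p q = 1) : ∀ t p, ∑ q, kerPow K t p q = 1
  | 0, p => by simp [kerPow]
  | t + 1, p => by
    simp only [kerPow]
    rw [sum_comm]
    simp_rw [← mul_sum, sum_kerPow hK1 t, mul_one, hK1]

theorem kerPow_le_one (hK0 : ∀ p q, 0 ≤ K p q) (hK1 : ∀ p, ∑ q, K p q = 1)
    (t : ℕ) (p q : T) : kerPow K t p q ≤ 1 :=
  sum_kerPow hK1 t p ▸ single_le_sum (fun q' _ => kerPow_nonneg hK0 t p q') (mem_univ q)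

theorem kerPow_succ' (t : ℕ) (p q : T) :
    kerPow K (t + 1) p q = ∑ u, kerPow K t p u * K u q := by
  induction t generalizing p q with
  | zero => simp [kerPow]
  | succ t ih =>
    calc kerPow K (t + 2) p q = ∑ u, K p u * ∑ v, kerPow K t u v * K v q := by
          simp only [kerPow] at ih ⊢; simp_rw [ih]
      _ = ∑ v, (∑ u, K p u * kerPow K t u v) * K v q := by
          simp_rw [mul_sum, sum_mul, mul_assoc]
          exact sum_comm
      _ = ∑ v, kerPow K (t + 1) p v * K v q := rfl

variable (K) in
noncomputable def discSum (γ : ℝ) (f : T → ℝ) (p : T) : ℝ :=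
  ∑' t : ℕ, γ ^ t * ∑ q, kerPow K t p q * f q

variable {γ : ℝ}

theorem summable_discSum (hK0 : ∀ p q, 0 ≤ K p q) (hK1 : ∀ p, ∑ q, K p q = 1)
    (hγ0 : 0 ≤ γ) (hγ1 : γ < 1) (f : T → ℝ) (p : T) :
    Summable fun t => γ ^ t * ∑ q, kerPow K t p q * f q := by
  refine Summable.of_norm_bounded ((summable_geometric_of_lt_one hγ0 hγ1).mul_right
    (∑ q, |f q|)) fun t => ?_
  rw [Real.norm_eq_abs, abs_mul, abs_pow, abs_of_nonneg hγ0]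
  gcongr
  calc |∑ q, kerPow K t p q * f q| ≤ ∑ q, |kerPow K t p q * f q| := abs_sum_le_sum_abs _ _
    _ ≤ ∑ q, |f q| := sum_le_sum fun q _ => by
      rw [abs_mul, abs_of_nonneg (kerPow_nonneg hK0 t p q)]
      exact mul_le_of_le_one_left (abs_nonneg _) (kerPow_le_one hK0 hK1 t p q)

section Stochastic

variable (hK0 : ∀ p q, 0 ≤ K p q) (hK1 : ∀ p, ∑ q, K p q = 1) (hγ0 : 0 ≤ γ) (hγ1 : γ < 1)
include hK0 hK1 hγ0 hγ1

theorem discSum_add (f g : T → ℝ) (p : T) :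
    discSum K γ (fun q => f q + g q) p = discSum K γ f p + discSum K γ g p := by
  rw [discSum, discSum, discSum, ← (summable_discSum hK0 hK1 hγ0 hγ1 f p).tsum_add
    (summable_discSum hK0 hK1 hγ0 hγ1 g p)]
  simp_rw [mul_add, sum_add_distrib, mul_add]

theorem discSum_eq_add_mul_sum (f : T → ℝ) (p : T) :
    discSum K γ f p = f p + γ * ∑ q, K p q * discSum K γ f q := by
  have hsum := summable_discSum hK0 hK1 hγ0 hγ1 f
  have shift : ∀ t : ℕ, γ ^ (t + 1) * ∑ r, kerPow K (t + 1) p r * f r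
      = ∑ q, K p q * (γ * (γ ^ t * ∑ r, kerPow K t q r * f r)) := fun t => by
    simp only [kerPow, sum_mul, mul_sum, pow_succ]
    rw [sum_comm]
    exact sum_congr rfl fun q _ => sum_congr rfl fun r _ => by ring
  rw [discSum, (hsum p).tsum_eq_zero_add, tsum_congr shift,
    Summable.tsum_finsetSum fun q _ => ((hsum q).mul_left γ).mul_left (K p q)]
  congr 1
  · simp [kerPow]
  · rw [mul_sum]
    refine sum_congr rfl fun q _ => ?_
    rw [tsum_mul_left, tsum_mul_left, discSum]
    ring

theorem discSum_telescope (g : T → ℝ) (p : T) :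
    discSum K γ (fun q => γ * ∑ r, K q r * g r - g q) p = -g p := by
  set c : ℕ → ℝ := fun t => γ ^ t * ∑ q, kerPow K t p q * g q
  have hc : Summable c := summable_discSum hK0 hK1 hγ0 hγ1 g p
  have step : ∀ t, γ ^ t * ∑ q, kerPow K t p q * (γ * ∑ r, K q r * g r - g q)
      = c (t + 1) - c t := fun t => by
    simp only [c, kerPow_succ', mul_sub, sum_sub_distrib, pow_succ, sum_mul, mul_sum]
    congr 1
    rw [sum_comm]
    exact sum_congr rfl fun r _ => sum_congr rfl fun q _ => by ring
  rw [discSum, tsum_congr step, ((summable_nat_add_iff 1).mpr hc).tsum_sub hc,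
    hc.tsum_eq_zero_add]
  simp [c, kerPow]

end Stochastic

end Kernel

section MDP

variable {S A : Type*} {P : S → A → S → ℝ} {π : S → A → ℝ}

theorem saKer_nonneg (hP0 : ∀ s a s', 0 ≤ P s a s') (hπ0 : ∀ s a, 0 ≤ π s a)
    (p q : S × A) : 0 ≤ saKer P π p q :=
  mul_nonneg (hP0 _ _ _) (hπ0 _ _)

theorem sum_saKer_mul_fst [Fintype S] [Fintype A] (hπ1 : ∀ s, ∑ a, π s a = 1)
    (g : S → ℝ) (p : S × A) :
    ∑ q, saKer P π p q * g q.1 = ∑ s', P p.1 p.2 s' * g s' := by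
  rw [Fintype.sum_prod_type]
  refine sum_congr rfl fun s' _ => ?_
  simp only [saKer]
  rw [← sum_mul, ← mul_sum, hπ1, mul_one]

theorem sum_saKer [Fintype S] [Fintype A] (hP1 : ∀ s a, ∑ s', P s a s' = 1)
    (hπ1 : ∀ s, ∑ a, π s a = 1) (p : S × A) : ∑ q, saKer P π p q = 1 := by
  simpa [hP1] using sum_saKer_mul_fst (P := P) hπ1 (fun _ => 1) p

variable [Fintype S] [Fintype A] [DecidableEq S] [DecidableEq A]

theorem Qgen_eq_discSum (f : S → A → ℝ) (γ : ℝ) (s : S) (a : A) :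
    Qgen P π f γ s a = discSum (saKer P π) γ (fun p => f p.1 p.2) (s, a) :=
  rfl

variable {γ : ℝ} (hP0 : ∀ s a s', 0 ≤ P s a s') (hP1 : ∀ s a, ∑ s', P s a s' = 1)
  (hπ0 : ∀ s a, 0 ≤ π s a) (hπ1 : ∀ s, ∑ a, π s a = 1) (hγ0 : 0 ≤ γ) (hγ1 : γ < 1)
include hP0 hP1 hπ0 hπ1 hγ0 hγ1

theorem Qgen_bellman (f : S → A → ℝ) (s : S) (a : A) :
    Qgen P π f γ s a = f s a + γ * ∑ s', P s a s' * ∑ b, π s' b * Qgen P π f γ s' b := by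
  rw [Qgen_eq_discSum,
    discSum_eq_add_mul_sum (saKer_nonneg hP0 hπ0) (sum_saKer hP1 hπ1) hγ0 hγ1,
    Fintype.sum_prod_type]
  simp_rw [saKer, mul_sum, mul_assoc]
  rfl

theorem Qgen_shaped (f : S → A → ℝ) (g : S → ℝ) (s : S) (a : A) :
    Qgen P π (fun s a => f s a + (γ * ∑ s', P s a s' * g s' - g s)) γ s a
      = Qgen P π f γ s a - g s := by
  have hK0 := saKer_nonneg hP0 hπ0
  have hK1 := sum_saKer hP1 hπ1
  simp_rw [Qgen_eq_discSum, ← sum_saKer_mul_fst hπ1 g]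
  rw [discSum_add hK0 hK1 hγ0 hγ1, discSum_telescope hK0 hK1 hγ0 hγ1 (fun q => g q.1),
    sub_eq_add_neg]

theorem expDisc_shaped (μ : S → ℝ) (f : S → A → ℝ) (g : S → ℝ) :
    expDisc P π μ γ (fun s a => f s a + (γ * ∑ s', P s a s' * g s' - g s))
      = expDisc P π μ γ f - ∑ s, μ s * g s := by
  simp_rw [expDisc, Qgen_shaped hP0 hP1 hπ0 hπ1 hγ0 hγ1, mul_sub, sum_sub_distrib, ← sum_mul,
    hπ1, one_mul, ← sum_sub_distrib, ← mul_sub]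

end MDP

theorem stmt_9_general {S A : Type*} [Fintype S] [Fintype A] [DecidableEq S] [DecidableEq A]
    (P : S → A → S → ℝ) (π πt : S → A → ℝ) (R : S → A → ℝ) (γ : ℝ) (μ : S → ℝ)
    (hP0 : ∀ s a s', 0 ≤ P s a s') (hP1 : ∀ s a, ∑ s', P s a s' = 1)
    (hπ0 : ∀ s a, 0 ≤ π s a) (hπ1 : ∀ s, ∑ a, π s a = 1)
    (hπt0 : ∀ s a, 0 ≤ πt s a) (hπt1 : ∀ s, ∑ a, πt s a = 1)
    (hγ0 : 0 ≤ γ) (hγ1 : γ < 1)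
    (Jπ Jπt : ℝ) (Q : S → A → ℝ) (V : S → ℝ) (Adv : S → A → ℝ)
    (hJπ : Jπ = (1 - γ) * expDisc P π μ γ R)
    (hJπt : Jπt = (1 - γ) * expDisc P πt μ γ R)
    (hQ : ∀ s a, Q s a = Qgen P π R γ s a)
    (hV : ∀ s, V s = ∑ a, π s a * Q s a)
    (hA : ∀ s a, Adv s a = Q s a - V s) :
    Jπt = Jπ + (1 - γ) * expDisc P πt μ γ Adv := by
  have hQV : ∀ s a, Q s a = R s a + γ * ∑ s', P s a s' * V s' := fun s a => by
    simp_rw [hV, hQ]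
    exact Qgen_bellman hP0 hP1 hπ0 hπ1 hγ0 hγ1 R s a
  have hAdv : Adv = fun s a => R s a + (γ * ∑ s', P s a s' * V s' - V s) := by
    ext s a
    rw [hA, hQV]
    ring
  have hVμ : expDisc P π μ γ R = ∑ s, μ s * V s := by
    simp_rw [expDisc, hV, hQ]
  rw [hJπt, hJπ, hAdv, expDisc_shaped hP0 hP1 hπt0 hπt1 hγ0 hγ1, hVμ]
  ring

/-- Performance difference lemma (Kakade–Langford) for the normalized expected return. -/
theorem stmt_9 {S A : Type*} [Fintype S] [Fintype A] [DecidableEq S] [DecidableEq A]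
    (P : S → A → S → ℝ) (π πt : S → A → ℝ) (R : S → A → ℝ) (γ : ℝ) (μ : S → ℝ)
    (hP0 : ∀ s a s', 0 ≤ P s a s') (hP1 : ∀ s a, ∑ s', P s a s' = 1)
    (hπ0 : ∀ s a, 0 ≤ π s a) (hπ1 : ∀ s, ∑ a, π s a = 1)
    (hπt0 : ∀ s a, 0 ≤ πt s a) (hπt1 : ∀ s, ∑ a, πt s a = 1)
    (hμ0 : ∀ s, 0 ≤ μ s) (hμ1 : ∑ s, μ s = 1)
    (hγ0 : 0 ≤ γ) (hγ1 : γ < 1)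
    (Jπ Jπt : ℝ) (Q : S → A → ℝ) (V : S → ℝ) (Adv : S → A → ℝ)
    (hJπ : Jπ = (1 - γ) * expDisc P π μ γ R)
    (hJπt : Jπt = (1 - γ) * expDisc P πt μ γ R)
    (hQ : ∀ s a, Q s a = Qgen P π R γ s a)
    (hV : ∀ s, V s = ∑ a, π s a * Q s a)
    (hA : ∀ s a, Adv s a = Q s a - V s) :
    Jπt = Jπ + (1 - γ) * expDisc P πt μ γ Adv :=
  stmt_9_general P π πt R γ μ hP0 hP1 hπ0 hπ1 hπt0 hπt1 hγ0 hγ1 Jπ Jπt Q V Adv hJπ hJπt hQ hV hA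
end

section
/- (Mean-volatility performance difference) Define η_π = J_π - λ ν²_π with λ ≥ 0, J_π the normalized expected return and ν²_π the reward volatility, and the mean-volatility advantage A^λ_π(s,a) = Q_π(s,a) - λ X_π(s,a) - (V_π(s) - λ W_π(s)) where X_π, W_π are the action- and state-volatility functions for the constant J_π. Then for any two policies π, π̃: η_{π̃} = η_π + (1-γ) E_{τ|π̃}[∑_t γ^t A^λ_π(s_t,a_t)] + λ (1-γ)² (E_{τ|π̃}[∑_t γ^t A_π(s_t,a_t)])². -/
open Finset

/-!
Let `G_π f = ∑ₜ γᵗ M_πᵗ f`, where `M_π` is the (row-stochastic) state-action transition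
matrix of `π`. By the Bellman equation `G_π f = f + γ M_π G_π f`, the `π`-advantage of `f`
equals `f + γ M_π̃ V - V`, with `V` the `π`-value of `f`, and `G_π̃ (γ M_π̃ V - V) = -V`
telescopes; this is the performance difference lemma `E_π̃[A_π f] = E_π̃[f] - E_π[f]`.
Applied to `R` it gives `(1 - γ) E_π̃[A_π] = J_π̃ - J_π`, and applied to `(R - J_π)²` the
volatility part. Recentering, `(R - J_π̃)² = (R - J_π)² + 2 (J_π - J_π̃) R + J_π̃² - J_π²`, so
`ν²_π̃ = (1 - γ) E_π̃[(R - J_π)²] - (J_π̃ - J_π)²`, which produces the quadratic term.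
-/

open Matrix

section DiscountedSum

variable {T : Type*} [Fintype T] [DecidableEq T] {M : Matrix T T ℝ} {γ : ℝ}

noncomputable def discountedSum (M : Matrix T T ℝ) (γ : ℝ) (g : T → ℝ) (x : T) : ℝ :=
  ∑' t : ℕ, γ ^ t * (M ^ t *ᵥ g) x

lemma abs_mulVec_le_of_mem_rowStochastic (hM : M ∈ rowStochastic ℝ T) (g : T → ℝ) (x : T) :
    |(M *ᵥ g) x| ≤ ∑ y, |g y| :=
  calc |(M *ᵥ g) x| ≤ ∑ y, |M x y * g y| := abs_sum_le_sum_abs _ _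
    _ ≤ ∑ y, |g y| := sum_le_sum fun y _ => by
        rw [abs_mul, abs_of_nonneg (nonneg_of_mem_rowStochastic hM)]
        exact mul_le_of_le_one_left (abs_nonneg _) (le_one_of_mem_rowStochastic hM)

lemma summable_discountedSum (hM : M ∈ rowStochastic ℝ T) (hγ0 : 0 ≤ γ) (hγ1 : γ < 1)
    (g : T → ℝ) (x : T) : Summable fun t : ℕ => γ ^ t * (M ^ t *ᵥ g) x := by
  refine Summable.of_norm_bounded ((summable_geometric_of_lt_one hγ0 hγ1).mul_right
    (∑ y, |g y|)) fun t => ?_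
  rw [Real.norm_eq_abs, abs_mul, abs_of_nonneg (pow_nonneg hγ0 t)]
  exact mul_le_mul_of_nonneg_left
    (abs_mulVec_le_of_mem_rowStochastic (pow_mem hM t) g x) (pow_nonneg hγ0 t)

lemma discountedSum_add (hM : M ∈ rowStochastic ℝ T) (hγ0 : 0 ≤ γ) (hγ1 : γ < 1)
    (g h : T → ℝ) (x : T) :
    discountedSum M γ (g + h) x = discountedSum M γ g x + discountedSum M γ h x := by
  simp only [discountedSum, mulVec_add, Pi.add_apply, mul_add]
  exact (summable_discountedSum hM hγ0 hγ1 g x).tsum_add (summable_discountedSum hM hγ0 hγ1 h x)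

lemma discountedSum_smul (c : ℝ) (g : T → ℝ) (x : T) :
    discountedSum M γ (c • g) x = c * discountedSum M γ g x := by
  simp only [discountedSum, mulVec_smul, Pi.smul_apply, smul_eq_mul, ← tsum_mul_left]
  exact tsum_congr fun t => by ring

lemma discountedSum_const (hM : M ∈ rowStochastic ℝ T) (hγ0 : 0 ≤ γ) (hγ1 : γ < 1)
    (c : ℝ) (x : T) : discountedSum M γ (fun _ => c) x = c / (1 - γ) := by
  have hpow : ∀ t : ℕ, (M ^ t *ᵥ fun _ => c) = fun _ => c := fun t => by
    rw [show (fun _ : T => c) = c • 1 by ext; simp, mulVec_smul,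
      one_vecMul_of_mem_rowStochastic (pow_mem hM t)]
  simp only [discountedSum, hpow, tsum_mul_right, tsum_geometric_of_lt_one hγ0 hγ1]
  ring

lemma discountedSum_eq_add_mulVec (hM : M ∈ rowStochastic ℝ T) (hγ0 : 0 ≤ γ) (hγ1 : γ < 1)
    (g : T → ℝ) (x : T) :
    discountedSum M γ g x = g x + γ * (M *ᵥ discountedSum M γ g) x := by
  have hstep : ∀ t : ℕ, γ ^ (t + 1) * (M ^ (t + 1) *ᵥ g) x
      = γ * ∑ y, M x y * (γ ^ t * (M ^ t *ᵥ g) y) := fun t => by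
    rw [pow_succ' γ, pow_succ' M, ← mulVec_mulVec, mulVec, dotProduct, mul_sum, mul_sum]
    exact sum_congr rfl fun y _ => by ring
  rw [discountedSum, (summable_discountedSum hM hγ0 hγ1 g x).tsum_eq_zero_add, tsum_congr hstep,
    tsum_mul_left, Summable.tsum_finsetSum fun y _ =>
      (summable_discountedSum hM hγ0 hγ1 g y).mul_left (M x y)]
  simp [mulVec, dotProduct, discountedSum, tsum_mul_left, one_apply]

lemma discountedSum_smul_mulVec_sub (hM : M ∈ rowStochastic ℝ T) (hγ0 : 0 ≤ γ) (hγ1 : γ < 1)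
    (v : T → ℝ) (x : T) : discountedSum M γ (γ • (M *ᵥ v) - v) x = -v x := by
  set a : ℕ → ℝ := fun t => γ ^ t * (M ^ t *ᵥ v) x
  have ha : Summable a := summable_discountedSum hM hγ0 hγ1 v x
  have hterm : ∀ t : ℕ, γ ^ t * (M ^ t *ᵥ (γ • (M *ᵥ v) - v)) x = a (t + 1) - a t := fun t => by
    simp only [a, mulVec_sub, mulVec_smul, mulVec_mulVec, ← pow_succ, Pi.sub_apply,
      Pi.smul_apply, smul_eq_mul]
    ring
  rw [discountedSum, tsum_congr hterm, ((summable_nat_add_iff 1).2 ha).tsum_sub ha,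
    ha.tsum_eq_zero_add]
  simp [a]

end DiscountedSum

lemma kerPow_eq_pow {T : Type*} [Fintype T] [DecidableEq T] (K : T → T → ℝ) (t : ℕ) :
    kerPow K t = Matrix.of K ^ t := by
  induction t with
  | zero => ext x y; simp [kerPow, one_apply]
  | succ t ih => ext x y; rw [pow_succ', mul_apply, ← ih]; rfl

lemma saKer_mulVec {S A : Type*} [Fintype S] [Fintype A] (P : S → A → S → ℝ) (ρ : S → A → ℝ)
    (g : S × A → ℝ) (s : S) (a : A) :
    (Matrix.of (saKer P ρ) *ᵥ g) (s, a) = ∑ s', P s a s' * ∑ b, ρ s' b * g (s', b) := by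
  simp [mulVec, dotProduct, saKer, Fintype.sum_prod_type, mul_sum, mul_assoc]

section MDP

variable {S A : Type*} [Fintype S] [Fintype A] [DecidableEq S] [DecidableEq A]
  {P : S → A → S → ℝ} {ρ : S → A → ℝ} {γ : ℝ} {μ : S → ℝ}

lemma saKer_mem_rowStochastic (hP0 : ∀ s a s', 0 ≤ P s a s') (hP1 : ∀ s a, ∑ s', P s a s' = 1)
    (hρ0 : ∀ s a, 0 ≤ ρ s a) (hρ1 : ∀ s, ∑ a, ρ s a = 1) :
    Matrix.of (saKer P ρ) ∈ rowStochastic ℝ (S × A) := by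
  refine mem_rowStochastic_iff_sum.2 ⟨fun p q => mul_nonneg (hP0 _ _ _) (hρ0 _ _), fun p => ?_⟩
  simp [saKer, Fintype.sum_prod_type, ← mul_sum, hρ1, hP1]

lemma Qgen_eq_discountedSum (f : S → A → ℝ) (s : S) (a : A) :
    Qgen P ρ f γ s a = discountedSum (Matrix.of (saKer P ρ)) γ (Function.uncurry f) (s, a) := by
  simp only [Qgen, discountedSum, kerPow_eq_pow]
  rfl

lemma expDisc_add (hK : Matrix.of (saKer P ρ) ∈ rowStochastic ℝ (S × A)) (hγ0 : 0 ≤ γ)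
    (hγ1 : γ < 1) (g h : S → A → ℝ) :
    expDisc P ρ μ γ (fun s a => g s a + h s a) = expDisc P ρ μ γ g + expDisc P ρ μ γ h := by
  have huncurry : Function.uncurry (fun s a => g s a + h s a)
      = Function.uncurry g + Function.uncurry h := rfl
  simp only [expDisc, Qgen_eq_discountedSum, huncurry, discountedSum_add hK hγ0 hγ1, mul_add,
    sum_add_distrib]

lemma expDisc_const_mul (c : ℝ) (g : S → A → ℝ) :
    expDisc P ρ μ γ (fun s a => c * g s a) = c * expDisc P ρ μ γ g := by
  have huncurry : Function.uncurry (fun s a => c * g s a) = c • Function.uncurry g := rfl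
  simp only [expDisc, Qgen_eq_discountedSum, huncurry, discountedSum_smul, mul_sum]
  exact sum_congr rfl fun s _ => sum_congr rfl fun a _ => by ring

lemma expDisc_const (hK : Matrix.of (saKer P ρ) ∈ rowStochastic ℝ (S × A))
    (hρ1 : ∀ s, ∑ a, ρ s a = 1) (hμ1 : ∑ s, μ s = 1) (hγ0 : 0 ≤ γ) (hγ1 : γ < 1) (c : ℝ) :
    expDisc P ρ μ γ (fun _ _ => c) = c / (1 - γ) := by
  simp only [expDisc, Qgen_eq_discountedSum]
  simp [Function.uncurry_def, discountedSum_const hK hγ0 hγ1, ← sum_mul, hρ1, hμ1]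

lemma Qgen_performance_difference {π πt : S → A → ℝ}
    (hK : Matrix.of (saKer P π) ∈ rowStochastic ℝ (S × A))
    (hKt : Matrix.of (saKer P πt) ∈ rowStochastic ℝ (S × A)) (hπt1 : ∀ s, ∑ a, πt s a = 1)
    (hγ0 : 0 ≤ γ) (hγ1 : γ < 1) (f : S → A → ℝ) (s : S) (a : A) :
    Qgen P πt (fun s a => Qgen P π f γ s a - ∑ b, π s b * Qgen P π f γ s b) γ s a
      = Qgen P πt f γ s a - ∑ b, π s b * Qgen P π f γ s b := by
  set V : S × A → ℝ := fun p => ∑ b, π p.1 b * Qgen P π f γ p.1 b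
  have hTD : Function.uncurry (fun s a => Qgen P π f γ s a - ∑ b, π s b * Qgen P π f γ s b)
      = Function.uncurry f + (γ • (Matrix.of (saKer P πt) *ᵥ V) - V) := by
    ext ⟨s, a⟩
    have hKtV : (Matrix.of (saKer P πt) *ᵥ V) (s, a) = ∑ s', P s a s' * V (s', a) := by
      simp only [saKer_mulVec, V, ← sum_mul, hπt1, one_mul]
    rw [Function.uncurry_apply_pair, Qgen_eq_discountedSum,
      discountedSum_eq_add_mulVec hK hγ0 hγ1, saKer_mulVec, Pi.add_apply, Pi.sub_apply,
      Pi.smul_apply, smul_eq_mul, hKtV]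
    simp only [V, Qgen_eq_discountedSum, Function.uncurry_apply_pair]
    ring
  rw [Qgen_eq_discountedSum, hTD, discountedSum_add hKt hγ0 hγ1,
    discountedSum_smul_mulVec_sub hKt hγ0 hγ1, ← Qgen_eq_discountedSum]
  rfl

lemma expDisc_performance_difference {π πt : S → A → ℝ}
    (hK : Matrix.of (saKer P π) ∈ rowStochastic ℝ (S × A))
    (hKt : Matrix.of (saKer P πt) ∈ rowStochastic ℝ (S × A)) (hπt1 : ∀ s, ∑ a, πt s a = 1)
    (hγ0 : 0 ≤ γ) (hγ1 : γ < 1) (f : S → A → ℝ) :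
    expDisc P πt μ γ (fun s a => Qgen P π f γ s a - ∑ b, π s b * Qgen P π f γ s b)
      = expDisc P πt μ γ f - expDisc P π μ γ f := by
  simp only [expDisc, Qgen_performance_difference hK hKt hπt1 hγ0 hγ1, mul_sub, sum_sub_distrib,
    ← sum_mul, hπt1, one_mul]

end MDP

theorem stmt_10_general {S A : Type*} [Fintype S] [Fintype A] [DecidableEq S] [DecidableEq A]
    (P : S → A → S → ℝ) (π πt : S → A → ℝ) (R : S → A → ℝ) (γ lam : ℝ) (μ : S → ℝ)
    (hP0 : ∀ s a s', 0 ≤ P s a s') (hP1 : ∀ s a, ∑ s', P s a s' = 1)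
    (hπ0 : ∀ s a, 0 ≤ π s a) (hπ1 : ∀ s, ∑ a, π s a = 1)
    (hπt0 : ∀ s a, 0 ≤ πt s a) (hπt1 : ∀ s, ∑ a, πt s a = 1)
    (hμ1 : ∑ s, μ s = 1)
    (hγ0 : 0 ≤ γ) (hγ1 : γ < 1)
    (Jπ Jπt ν2π ν2πt ηπ ηπt : ℝ)
    (Q : S → A → ℝ) (V : S → ℝ) (X : S → A → ℝ) (W : S → ℝ)
    (Adv AdvL : S → A → ℝ)
    (hJπ : Jπ = (1 - γ) * expDisc P π μ γ R)
    (hJπt : Jπt = (1 - γ) * expDisc P πt μ γ R)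
    (hν2π : ν2π = (1 - γ) * expDisc P π μ γ (fun s a => (R s a - Jπ) ^ 2))
    (hν2πt : ν2πt = (1 - γ) * expDisc P πt μ γ (fun s a => (R s a - Jπt) ^ 2))
    (hηπ : ηπ = Jπ - lam * ν2π) (hηπt : ηπt = Jπt - lam * ν2πt)
    (hQ : ∀ s a, Q s a = Qgen P π R γ s a)
    (hV : ∀ s, V s = ∑ a, π s a * Q s a)
    (hX : ∀ s a, X s a = Qgen P π (fun s' a' => (R s' a' - Jπ) ^ 2) γ s a)
    (hW : ∀ s, W s = ∑ a, π s a * X s a)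
    (hA : ∀ s a, Adv s a = Q s a - V s)
    (hAL : ∀ s a, AdvL s a = Q s a - lam * X s a - (V s - lam * W s)) :
    ηπt = ηπ + (1 - γ) * expDisc P πt μ γ AdvL
      + lam * (1 - γ) ^ 2 * (expDisc P πt μ γ Adv) ^ 2 := by
  have hK := saKer_mem_rowStochastic hP0 hP1 hπ0 hπ1
  have hKt := saKer_mem_rowStochastic hP0 hP1 hπt0 hπt1
  set D : S → A → ℝ := fun s a => (R s a - Jπ) ^ 2
  have hAdv : expDisc P πt μ γ Adv = expDisc P πt μ γ R - expDisc P π μ γ R := by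
    rw [← expDisc_performance_difference hK hKt hπt1 hγ0 hγ1]
    congr with s a
    simp only [hA, hV, hQ]
  have hXW : expDisc P πt μ γ (fun s a => X s a - W s)
      = expDisc P πt μ γ D - expDisc P π μ γ D := by
    rw [← expDisc_performance_difference hK hKt hπt1 hγ0 hγ1]
    congr with s a
    simp only [hX, hW, D]
  have hAdvL : expDisc P πt μ γ AdvL
      = expDisc P πt μ γ Adv + -lam * expDisc P πt μ γ (fun s a => X s a - W s) := by
    rw [← expDisc_const_mul, ← expDisc_add hKt hγ0 hγ1]
    congr with s a
    rw [hAL, hA]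
    ring
  have hvol : expDisc P πt μ γ (fun s a => (R s a - Jπt) ^ 2)
      = expDisc P πt μ γ D + 2 * (Jπ - Jπt) * expDisc P πt μ γ R
        + (Jπt ^ 2 - Jπ ^ 2) / (1 - γ) := by
    rw [← expDisc_const_mul, ← expDisc_const hKt hπt1 hμ1 hγ0 hγ1, ← expDisc_add hKt hγ0 hγ1,
      ← expDisc_add hKt hγ0 hγ1]
    congr with s a
    ring
  have hγ : 1 - γ ≠ 0 := by linarith
  rw [hηπt, hηπ, hν2πt, hν2π, hvol, hAdvL, hAdv, hXW, hJπt, hJπ]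
  field_simp
  ring

/-- Mean-volatility performance difference lemma. -/
theorem stmt_10 {S A : Type*} [Fintype S] [Fintype A] [DecidableEq S] [DecidableEq A]
    (P : S → A → S → ℝ) (π πt : S → A → ℝ) (R : S → A → ℝ) (γ lam : ℝ) (μ : S → ℝ)
    (hP0 : ∀ s a s', 0 ≤ P s a s') (hP1 : ∀ s a, ∑ s', P s a s' = 1)
    (hπ0 : ∀ s a, 0 ≤ π s a) (hπ1 : ∀ s, ∑ a, π s a = 1)
    (hπt0 : ∀ s a, 0 ≤ πt s a) (hπt1 : ∀ s, ∑ a, πt s a = 1)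
    (hμ0 : ∀ s, 0 ≤ μ s) (hμ1 : ∑ s, μ s = 1)
    (hγ0 : 0 ≤ γ) (hγ1 : γ < 1) (hlam : 0 ≤ lam)
    (Jπ Jπt ν2π ν2πt ηπ ηπt : ℝ)
    (Q : S → A → ℝ) (V : S → ℝ) (X : S → A → ℝ) (W : S → ℝ)
    (Adv AdvL : S → A → ℝ)
    (hJπ : Jπ = (1 - γ) * expDisc P π μ γ R)
    (hJπt : Jπt = (1 - γ) * expDisc P πt μ γ R)
    (hν2π : ν2π = (1 - γ) * expDisc P π μ γ (fun s a => (R s a - Jπ) ^ 2))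
    (hν2πt : ν2πt = (1 - γ) * expDisc P πt μ γ (fun s a => (R s a - Jπt) ^ 2))
    (hηπ : ηπ = Jπ - lam * ν2π) (hηπt : ηπt = Jπt - lam * ν2πt)
    (hQ : ∀ s a, Q s a = Qgen P π R γ s a)
    (hV : ∀ s, V s = ∑ a, π s a * Q s a)
    (hX : ∀ s a, X s a = Qgen P π (fun s' a' => (R s' a' - Jπ) ^ 2) γ s a)
    (hW : ∀ s, W s = ∑ a, π s a * X s a)
    (hA : ∀ s a, Adv s a = Q s a - V s)
    (hAL : ∀ s a, AdvL s a = Q s a - lam * X s a - (V s - lam * W s)) :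
    ηπt = ηπ + (1 - γ) * expDisc P πt μ γ AdvL
      + lam * (1 - γ) ^ 2 * (expDisc P πt μ γ Adv) ^ 2 :=
  stmt_10_general P π πt R γ lam μ hP0 hP1 hπ0 hπ1 hπt0 hπt1 hμ1 hγ0 hγ1 Jπ Jπt ν2π ν2πt ηπ ηπt Q V
    X W Adv AdvL hJπ hJπt hν2π hν2πt hηπ hηπt hQ hV hX hW hA hAL
end
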